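/- Let A, B be n×n real upper-triangular matrices whose diagonal entries all have absolute value at most ρ < 1, with all entries bounded by M > 0. Then any product M_1⋯M_k with M_i ∈ {A,B} converges to 0 as k → ∞; more precisely, for every ε with ρ < ρ+ε < 1 there exists C with ‖M_1⋯M_k‖ ≤ C(ρ+ε)^k. -/

import Mathlib

/-!
Conjugating by `diag(1, δ, δ², …, δ^(n-1))` multiplies the `(i, j)` entry by `δ^(j-i)`. On an upper
triangular matrix this keeps the diagonal and shrinks every strictly upper entry by a factor at
least `δ`, so for `δ` small each conjugated factor has `∞`-operator norm (maximal absolute row sum)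
at most `ρ + n M δ ≤ ρ + ε`. Conjugation commutes with products, hence any product of `k` factors
has norm at most `‖D‖ ‖D⁻¹‖ (ρ + ε)^k`.
-/

attribute [local instance] Matrix.linftyOpNormedRing

open Matrix

theorem norm_mul_list_prod_le_of_norm_conj_le {R : Type*} [SeminormedRing R] {P Q : R}
    (hPQ : P * Q = 1) {r : ℝ} :
    ∀ l : List R, (∀ a ∈ l, ‖Q * a * P‖ ≤ r) → ‖Q * l.prod‖ ≤ ‖Q‖ * r ^ l.length
  | [], _ => by simp
  | a :: l, h => by
    have ha : ‖Q * a * P‖ ≤ r := h a List.mem_cons_self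
    have hl := norm_mul_list_prod_le_of_norm_conj_le hPQ l fun b hb =>
      h b (List.mem_cons_of_mem a hb)
    have hQal : Q * (a :: l).prod = Q * a * P * (Q * l.prod) := by
      simp only [List.prod_cons, mul_assoc, ← mul_assoc P Q, hPQ, one_mul]
    calc ‖Q * (a :: l).prod‖ ≤ ‖Q * a * P‖ * ‖Q * l.prod‖ := hQal ▸ norm_mul_le _ _
      _ ≤ r * (‖Q‖ * r ^ l.length) :=
        mul_le_mul ha hl (norm_nonneg _) ((norm_nonneg _).trans ha)
      _ = ‖Q‖ * r ^ (a :: l).length := by rw [List.length_cons, pow_succ]; ring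

theorem norm_list_prod_le_of_norm_conj_le {R : Type*} [SeminormedRing R] {P Q : R}
    (hPQ : P * Q = 1) {r : ℝ} {l : List R} (h : ∀ a ∈ l, ‖Q * a * P‖ ≤ r) :
    ‖l.prod‖ ≤ ‖P‖ * ‖Q‖ * r ^ l.length :=
  calc ‖l.prod‖ = ‖P * (Q * l.prod)‖ := by rw [← mul_assoc, hPQ, one_mul]
    _ ≤ ‖P‖ * (‖Q‖ * r ^ l.length) :=
      (norm_mul_le _ _).trans
        (mul_le_mul_of_nonneg_left (norm_mul_list_prod_le_of_norm_conj_le hPQ l h) (norm_nonneg _))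
    _ = ‖P‖ * ‖Q‖ * r ^ l.length := (mul_assoc _ _ _).symm

section
attribute [local instance] Matrix.linftyOpSeminormedAddCommGroup

theorem Matrix.linfty_opNorm_le_of_forall_sum_le {m n α : Type*} [Fintype m] [Fintype n]
    [Nonempty m] [SeminormedAddCommGroup α] {A : Matrix m n α} {r : ℝ}
    (h : ∀ i, ∑ j, ‖A i j‖ ≤ r) : ‖A‖ ≤ r := by
  have hr : 0 ≤ r := (Finset.sum_nonneg fun j _ => norm_nonneg _).trans (h (Classical.arbitrary m))
  rw [linfty_opNorm_def, ← Real.coe_toNNReal r hr, NNReal.coe_le_coe]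
  refine Finset.sup_le fun i _ => ?_
  rw [← NNReal.coe_le_coe, NNReal.coe_sum, Real.coe_toNNReal r hr]
  exact h i

end

def geomDiagonal (n : ℕ) (δ : ℝ) : Matrix (Fin n) (Fin n) ℝ :=
  diagonal fun i => δ ^ (i : ℕ)

section
variable {n : ℕ} {δ : ℝ}

theorem geomDiagonal_mul_geomDiagonal_inv (hδ : δ ≠ 0) :
    geomDiagonal n δ * geomDiagonal n δ⁻¹ = 1 := by
  simp only [geomDiagonal, diagonal_mul_diagonal, ← mul_pow, mul_inv_cancel₀ hδ, one_pow,
    diagonal_one]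

theorem geomDiagonal_conj_apply (X : Matrix (Fin n) (Fin n) ℝ) (i j : Fin n) :
    (geomDiagonal n δ⁻¹ * X * geomDiagonal n δ) i j = δ⁻¹ ^ (i : ℕ) * X i j * δ ^ (j : ℕ) := by
  simp only [geomDiagonal, mul_diagonal, diagonal_mul]

theorem geomDiagonal_conj_apply_self (hδ : δ ≠ 0) (X : Matrix (Fin n) (Fin n) ℝ) (i : Fin n) :
    (geomDiagonal n δ⁻¹ * X * geomDiagonal n δ) i i = X i i := by
  rw [geomDiagonal_conj_apply, inv_pow, mul_comm, ← mul_assoc,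
    mul_inv_cancel₀ (pow_ne_zero _ hδ), one_mul]

theorem abs_geomDiagonal_conj_apply_le {X : Matrix (Fin n) (Fin n) ℝ} (hX : X.BlockTriangular id)
    (hδ0 : 0 < δ) (hδ1 : δ ≤ 1) {M : ℝ} {i j : Fin n} (hij : i ≠ j) (hM : |X i j| ≤ M) :
    |(geomDiagonal n δ⁻¹ * X * geomDiagonal n δ) i j| ≤ M * δ := by
  rw [geomDiagonal_conj_apply]
  rcases hij.lt_or_gt with hlt | hgt
  · have hpow : δ⁻¹ ^ (i : ℕ) * δ ^ (j : ℕ) = δ ^ ((j : ℕ) - i) := by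
      rw [pow_sub₀ δ hδ0.ne' hlt.le, inv_pow, mul_comm]
    rw [mul_right_comm, hpow, abs_mul, abs_of_pos (pow_pos hδ0 _), mul_comm]
    exact mul_le_mul hM (pow_le_of_le_one hδ0.le hδ1 (by omega)) (pow_pos hδ0 _).le
      ((abs_nonneg _).trans hM)
  · rw [hX hgt, mul_zero, zero_mul, abs_zero]
    exact mul_nonneg ((abs_nonneg _).trans hM) hδ0.le

theorem norm_geomDiagonal_conj_le [NeZero n] {X : Matrix (Fin n) (Fin n) ℝ}
    (hX : X.BlockTriangular id) (hδ0 : 0 < δ) (hδ1 : δ ≤ 1) {ρ M : ℝ}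
    (hdiag : ∀ i, |X i i| ≤ ρ) (hent : ∀ i j, |X i j| ≤ M) :
    ‖geomDiagonal n δ⁻¹ * X * geomDiagonal n δ‖ ≤ ρ + n * M * δ := by
  refine linfty_opNorm_le_of_forall_sum_le fun i => ?_
  have hMδ : 0 ≤ M * δ := mul_nonneg ((abs_nonneg _).trans (hent i i)) hδ0.le
  have hentry : ∀ j, |(geomDiagonal n δ⁻¹ * X * geomDiagonal n δ) i j| ≤
      (if j = i then ρ else 0) + M * δ := by
    intro j
    split_ifs with hji
    · subst hji
      rw [geomDiagonal_conj_apply_self hδ0.ne']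
      linarith [hdiag j]
    · rw [zero_add]
      exact abs_geomDiagonal_conj_apply_le hX hδ0 hδ1 (Ne.symm hji) (hent i j)
  calc ∑ j, ‖(geomDiagonal n δ⁻¹ * X * geomDiagonal n δ) i j‖
      ≤ ∑ j, ((if j = i then ρ else 0) + M * δ) := Finset.sum_le_sum fun j _ => hentry j
    _ = ρ + n * M * δ := by
      simp only [Finset.sum_add_distrib, Finset.sum_ite_eq', Finset.mem_univ, if_true,
        Finset.sum_const, Finset.card_univ, Fintype.card_fin, nsmul_eq_mul]
      ring

end

theorem exists_pos_le_one_mul_le {c ε : ℝ} (hc : 0 ≤ c) (hε : 0 < ε) :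
    ∃ δ : ℝ, 0 < δ ∧ δ ≤ 1 ∧ c * δ ≤ ε := by
  refine ⟨ε / (c + ε), by positivity, (div_le_one (by positivity)).2 (by linarith), ?_⟩
  rw [mul_div_assoc', div_le_iff₀ (by positivity)]
  nlinarith

theorem stmt5_general (n : ℕ) (A B : Matrix (Fin n) (Fin n) ℝ)
    (hAtri : A.BlockTriangular id) (hBtri : B.BlockTriangular id)
    (ρ M : ℝ)
    (hAdiag : ∀ i, |A i i| ≤ ρ) (hBdiag : ∀ i, |B i i| ≤ ρ)
    (hAent : ∀ i j, |A i j| ≤ M) (hBent : ∀ i j, |B i j| ≤ M) :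
    ∀ ε : ℝ, 0 < ε → ρ + ε < 1 →
      ∃ C : ℝ, ∀ (k : ℕ) (w : Fin k → Bool),
        ‖(List.ofFn (fun i => if w i then A else B)).prod‖ ≤ C * (ρ + ε) ^ k := by
  intro ε hε _
  rcases n.eq_zero_or_pos with rfl | hn
  · exact ⟨0, fun k w => by simp [Subsingleton.elim _ (0 : Matrix (Fin 0) (Fin 0) ℝ)]⟩
  have : NeZero n := ⟨hn.ne'⟩
  have hM : 0 ≤ M := (abs_nonneg _).trans (hAent 0 0)
  obtain ⟨δ, hδ0, hδ1, hδε⟩ := exists_pos_le_one_mul_le (by positivity : 0 ≤ (n : ℝ) * M) hε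
  refine ⟨‖geomDiagonal n δ‖ * ‖geomDiagonal n δ⁻¹‖, fun k w => ?_⟩
  have hconj : ∀ X ∈ List.ofFn (fun i => if w i then A else B),
      ‖geomDiagonal n δ⁻¹ * X * geomDiagonal n δ‖ ≤ ρ + ε := by
    rintro X hX
    obtain ⟨i, rfl⟩ := List.mem_ofFn.mp hX
    split
    · exact (norm_geomDiagonal_conj_le hAtri hδ0 hδ1 hAdiag hAent).trans (by linarith)
    · exact (norm_geomDiagonal_conj_le hBtri hδ0 hδ1 hBdiag hBent).trans (by linarith)
  simpa using norm_list_prod_le_of_norm_conj_le (geomDiagonal_mul_geomDiagonal_inv hδ0.ne') hconj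

theorem stmt5 (n : ℕ) (A B : Matrix (Fin n) (Fin n) ℝ)
    (hAtri : A.BlockTriangular id) (hBtri : B.BlockTriangular id)
    (ρ M : ℝ) (hρ : ρ < 1) (hM : 0 < M)
    (hAdiag : ∀ i, |A i i| ≤ ρ) (hBdiag : ∀ i, |B i i| ≤ ρ)
    (hAent : ∀ i j, |A i j| ≤ M) (hBent : ∀ i j, |B i j| ≤ M) :
    ∀ ε : ℝ, 0 < ε → ρ + ε < 1 →
      ∃ C : ℝ, ∀ (k : ℕ) (w : Fin k → Bool),
        ‖(List.ofFn (fun i => if w i then A else B)).prod‖ ≤ C * (ρ + ε) ^ k :=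
  stmt5_general n A B hAtri hBtri ρ M hAdiag hBdiag hAent hBent
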